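/- If A ⊂_s B, then for any hesitant fuzzy element C, writing descending sequences, the j-th largest element of the Torra union B ∪ C is at least the j-th largest element of the Torra union A ∪ C for all j ≤ min(|A ∪ C|, |B ∪ C|); hence (A ∪ C) ⊂_s (B ∪ C) or (A ∪ C) ⊂_t (B ∪ C). -/

import Mathlib

/-- Supremum (maximum) of a multiset of reals in `[0,1]`, defaulting to `0`. -/
noncomputable def msup (A : Multiset ℝ) : ℝ := A.toList.foldr max 0

/-- Infimum (minimum) of a multiset of reals in `[0,1]`, defaulting to `1`. -/
noncomputable def minf (A : Multiset ℝ) : ℝ := A.toList.foldr min 1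

/-- Mean of a multiset of reals. -/
noncomputable def mmean (A : Multiset ℝ) : ℝ := A.sum / A.card

/-- The elements of a multiset sorted in descending order. -/
noncomputable def dsort (A : Multiset ℝ) : List ℝ := (A.sort (· ≤ ·)).reverse

/-- `A ⊂ₛ B`: `|A| ≥ |B|` and the `i`-th largest element of `B` is at least the
`i`-th largest element of `A`, for `i ≤ |B|`. -/
noncomputable def subS (A B : Multiset ℝ) : Prop :=
  B.card ≤ A.card ∧ ∀ i < B.card, (dsort A).getD i 0 ≤ (dsort B).getD i 0

/-- `A ⊂ₜ B`: `|A| < |B|` and the `i`-th largest element of `B` is at least the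
`i`-th largest element of `A`, for `i ≤ |A|`. -/
noncomputable def subT (A B : Multiset ℝ) : Prop :=
  A.card < B.card ∧ ∀ i < A.card, (dsort A).getD i 0 ≤ (dsort B).getD i 0

/-- Torra intersection of two hesitant fuzzy elements (as multisets). -/
noncomputable def tInter (A B : Multiset ℝ) : Multiset ℝ :=
  (A + B).filter (fun h => h ≤ min (msup A) (msup B))

/-- Torra union of two hesitant fuzzy elements (as multisets). -/
noncomputable def tUnion (A B : Multiset ℝ) : Multiset ℝ :=
  (A + B).filter (fun h => max (minf A) (minf B) ≤ h)

/-!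
Read the `j`-th largest element of a multiset `M` through counting: it is `≥ x` exactly when
more than `j` elements of `M` are `≥ x`. Both unions are threshold filters of `A + C` and `B + C`,
so it suffices to compare the counts of elements `≥ v`, where `v` is the `j`-th largest element
of `A ∪ C`. Above the threshold of `B ∪ C`, the hypothesis `A ⊂ₛ B` gives
`#{b ∈ B | v ≤ b} ≥ min #{a ∈ A | v ≤ a} |B|`, and the minimum cannot be `|B|`, since all of `B`
lying above `v > inf B` is impossible.
-/

namespace List

variable {α : Type*} [LinearOrder α] {l : List α}

theorem SortedGE.le_getElem_iff_lt_countP (hl : l.SortedGE) {j : ℕ} (hj : j < l.length)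
    (x : α) : x ≤ l[j] ↔ j < l.countP (fun y => x ≤ y) := by
  constructor
  · intro hx
    have hprefix : ∀ y ∈ l.take (j + 1), x ≤ y := by
      intro y hy
      obtain ⟨i, hi, rfl⟩ := mem_take_iff_getElem.mp hy
      exact hx.trans (hl.getElem_ge_getElem_of_le (by omega))
    calc j < (l.take (j + 1)).countP (fun y => x ≤ y) := by
          rw [countP_eq_length.mpr (by simpa using hprefix), length_take]
          omega
      _ ≤ l.countP (fun y => x ≤ y) := (take_sublist _ _).countP_le
  · intro hc
    by_contra! hx
    have hsuffix : (l.drop j).countP (fun y => x ≤ y) = 0 := by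
      rw [countP_eq_zero]
      intro y hy
      obtain ⟨i, hi, rfl⟩ := mem_drop_iff_getElem.mp hy
      simpa using (hl.getElem_ge_getElem_of_le (by omega)).trans_lt hx
    rw [← take_append_drop j l, countP_append, hsuffix] at hc
    have := length_take_le j l
    have := countP_le_length (p := fun y => x ≤ y) (l := l.take j)
    omega

end List

lemma coe_dsort (M : Multiset ℝ) : ((dsort M : List ℝ) : Multiset ℝ) = M := by
  rw [dsort, Multiset.coe_reverse, Multiset.sort_eq]

lemma length_dsort (M : Multiset ℝ) : (dsort M).length = M.card := by
  rw [dsort, List.length_reverse, Multiset.length_sort]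

lemma sortedGE_dsort (M : Multiset ℝ) : (dsort M).SortedGE :=
  (Multiset.pairwise_sort M (· ≤ ·)).sortedLE.reverse

lemma dsort_getD_mem {M : Multiset ℝ} {j : ℕ} (hj : j < M.card) : (dsort M).getD j 0 ∈ M := by
  rw [← length_dsort] at hj
  have hmem := List.getElem_mem hj
  rwa [← List.getD_eq_getElem _ 0 hj, ← Multiset.mem_coe, coe_dsort] at hmem

lemma le_dsort_getD_iff {M : Multiset ℝ} {j : ℕ} (hj : j < M.card) (x : ℝ) :
    x ≤ (dsort M).getD j 0 ↔ j < M.countP (x ≤ ·) := by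
  rw [← length_dsort] at hj
  rw [List.getD_eq_getElem _ 0 hj, (sortedGE_dsort M).le_getElem_iff_lt_countP hj,
    ← Multiset.coe_countP, coe_dsort]

lemma subS.min_countP_le {A B : Multiset ℝ} (hs : subS A B) (v : ℝ) :
    min (A.countP (v ≤ ·)) B.card ≤ B.countP (v ≤ ·) := by
  set m := min (A.countP (v ≤ ·)) B.card
  rcases Nat.eq_zero_or_pos m with hm | hm
  · omega
  have hmA : m - 1 < A.countP (v ≤ ·) := by omega
  have hmB : m - 1 < B.card := by omega
  have hvA : v ≤ (dsort A).getD (m - 1) 0 :=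
    (le_dsort_getD_iff (hmA.trans_le (Multiset.countP_le_card _ _)) v).mpr hmA
  have := (le_dsort_getD_iff hmB v).mp (hvA.trans (hs.2 _ hmB))
  omega

lemma countP_tUnion (A C : Multiset ℝ) (x : ℝ) :
    (tUnion A C).countP (x ≤ ·) = (A + C).countP (max (max (minf A) (minf C)) x ≤ ·) := by
  rw [tUnion, Multiset.countP_filter]
  exact Multiset.countP_congr rfl fun _ _ => by simp [and_comm]

lemma card_tUnion (A C : Multiset ℝ) :
    (tUnion A C).card = (A + C).countP (max (minf A) (minf C) ≤ ·) :=
  (Multiset.countP_eq_card_filter _ _).symm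

lemma le_minf {M : Multiset ℝ} {v : ℝ} (hv : v ≤ 1) (h : ∀ b ∈ M, v ≤ b) : v ≤ minf M := by
  rw [minf]
  have h' : ∀ b ∈ M.toList, v ≤ b := fun b hb => h b (Multiset.mem_toList.mp hb)
  generalize M.toList = l at h'
  induction l with
  | nil => simpa
  | cons a t ih => exact le_min (h' a (by simp)) (ih fun b hb => h' b (by simp [hb]))

theorem dsort_tUnion_getD_le {A B C : Multiset ℝ} (hs : subS A B)
    (hA1 : ∀ x ∈ A, x ≤ 1) (hC1 : ∀ x ∈ C, x ≤ 1) {j : ℕ}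
    (hjA : j < (tUnion A C).card) (hjB : j < (tUnion B C).card) :
    (dsort (tUnion A C)).getD j 0 ≤ (dsort (tUnion B C)).getD j 0 := by
  set v := (dsort (tUnion A C)).getD j 0
  rw [le_dsort_getD_iff hjB, countP_tUnion]
  rcases le_or_gt v (max (minf B) (minf C)) with hv | hv
  · rwa [max_eq_left hv, ← card_tUnion]
  rw [max_eq_right hv.le, Multiset.countP_add]
  have hAC : j < A.countP (v ≤ ·) + C.countP (v ≤ ·) := by
    rw [← Multiset.countP_add]
    exact ((le_dsort_getD_iff hjA v).mp le_rfl).trans_le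
      (Multiset.countP_le_of_le _ (Multiset.filter_le _ _))
  have hB : B.countP (v ≤ ·) < B.card := by
    by_contra! hcard
    have hv1 : v ≤ 1 := by
      rcases Multiset.mem_add.mp (Multiset.mem_filter.mp (dsort_getD_mem hjA)).1 with h | h
      exacts [hA1 v h, hC1 v h]
    have hallB : ∀ b ∈ B, v ≤ b :=
      Multiset.countP_eq_card.mp (hcard.antisymm' (Multiset.countP_le_card _ _))
    exact (le_minf hv1 hallB).not_gt (lt_of_le_of_lt (le_max_left _ _) hv)
  have := hs.min_countP_le v
  omega

lemma subS_or_subT_of_forall_getD_le {V W : Multiset ℝ}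
    (h : ∀ j < min V.card W.card, (dsort V).getD j 0 ≤ (dsort W).getD j 0) :
    subS V W ∨ subT V W := by
  rcases le_or_gt W.card V.card with hc | hc
  · exact .inl ⟨hc, fun i hi => h i (lt_min (hi.trans_le hc) hi)⟩
  · exact .inr ⟨hc, fun i hi => h i (lt_min hi (hi.trans hc))⟩

theorem stmt13_general (A B C : Multiset ℝ)
    (hA1 : ∀ x ∈ A, x ∈ Set.Icc (0:ℝ) 1)
    (hC1 : ∀ x ∈ C, x ∈ Set.Icc (0:ℝ) 1)
    (hs : subS A B) :
    (∀ j < min (tUnion A C).card (tUnion B C).card,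
      (dsort (tUnion A C)).getD j 0 ≤ (dsort (tUnion B C)).getD j 0) ∧
    (subS (tUnion A C) (tUnion B C) ∨ subT (tUnion A C) (tUnion B C)) := by
  have key : ∀ j < min (tUnion A C).card (tUnion B C).card,
      (dsort (tUnion A C)).getD j 0 ≤ (dsort (tUnion B C)).getD j 0 := fun j hj =>
    dsort_tUnion_getD_le hs (fun x hx => (hA1 x hx).2) (fun x hx => (hC1 x hx).2)
      (lt_min_iff.mp hj).1 (lt_min_iff.mp hj).2
  exact ⟨key, subS_or_subT_of_forall_getD_le key⟩

theorem stmt13 (A B C : Multiset ℝ) (hA : A ≠ 0) (hB : B ≠ 0) (hC : C ≠ 0)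
    (hA1 : ∀ x ∈ A, x ∈ Set.Icc (0:ℝ) 1) (hB1 : ∀ x ∈ B, x ∈ Set.Icc (0:ℝ) 1)
    (hC1 : ∀ x ∈ C, x ∈ Set.Icc (0:ℝ) 1)
    (hs : subS A B) :
    (∀ j < min (tUnion A C).card (tUnion B C).card,
      (dsort (tUnion A C)).getD j 0 ≤ (dsort (tUnion B C)).getD j 0) ∧
    (subS (tUnion A C) (tUnion B C) ∨ subT (tUnion A C) (tUnion B C)) :=
  stmt13_general A B C hA1 hC1 hs
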